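/- Let m be a measure of granularity of sets on U and let P, Q be equivalence relations on U. If P refines Q (P ⪯ Q), then Gμ_P ≤ Gμ_Q, where Gμ_R = μ_R·EG_m(U/R). -/

import Mathlib

/-- The equivalence class of `x` under the equivalence relation (setoid) `E`. -/
def ecls {U : Type*} (E : Setoid U) (x : U) : Set U := {y | E.r x y}

/-- Classical lower approximation of `X` with respect to `E`. -/
def lowerApprox {U : Type*} (E : Setoid U) (X : Set U) : Set U :=
  {x | ecls E x ⊆ X}

/-- Classical upper approximation of `X` with respect to `E`. -/
def upperApprox {U : Type*} (E : Setoid U) (X : Set U) : Set U :=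
  {x | (ecls E x ∩ X).Nonempty}

/-- `P` refines `Q`: every `P`-class is contained in the corresponding `Q`-class. -/
def Refines {U : Type*} (P Q : Setoid U) : Prop := ∀ x : U, ecls P x ⊆ ecls Q x

/-- α-probabilistic lower approximation of `X` with respect to `E`:
`{x | |[x]_E ∩ X| ≥ α·|[x]_E|}`. -/
noncomputable def aprLow {U : Type*} (E : Setoid U) (α : ℝ) (X : Set U) : Set U :=
  {x | α * ((ecls E x).ncard : ℝ) ≤ (((ecls E x) ∩ X).ncard : ℝ)}

/-- β-probabilistic upper approximation of `X` with respect to `E`: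
`{x | |[x]_E ∩ X| > β·|[x]_E|}`. -/
noncomputable def aprUp {U : Type*} (E : Setoid U) (β : ℝ) (X : Set U) : Set U :=
  {x | β * ((ecls E x).ncard : ℝ) < (((ecls E x) ∩ X).ncard : ℝ)}

/-- `η_R = (Σ_{Y ∈ U/D} |lower_R(apr_C^α(Y))|) / (|U|·M)` where `M = |U/D|`. -/
noncomputable def eta {U : Type*} [Fintype U] (C D : Setoid U) (α : ℝ) (R : Setoid U) : ℝ :=
  haveI : Fintype (Quotient D) := Fintype.ofFinite _
  (∑ q : Quotient D,
      ((lowerApprox R (aprLow C α {x | Quotient.mk D x = q})).ncard : ℝ)) /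
    ((Fintype.card U : ℝ) * (Fintype.card (Quotient D) : ℝ))

/-- `μ_R = (Σ_{Y ∈ U/D} |upper_R(Apr_C^β(Y))|) / (|U|·M)` where `M = |U/D|`. -/
noncomputable def mu {U : Type*} [Fintype U] (C D : Setoid U) (β : ℝ) (R : Setoid U) : ℝ :=
  haveI : Fintype (Quotient D) := Fintype.ofFinite _
  (∑ q : Quotient D,
      ((upperApprox R (aprUp C β {x | Quotient.mk D x = q})).ncard : ℝ)) /
    ((Fintype.card U : ℝ) * (Fintype.card (Quotient D) : ℝ))


/-- A measure of granularity of sets on `U`: nonnegative, strictly monotone with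
respect to strict inclusion, and invariant under cardinality. -/
def IsGranularityMeasure {U : Type*} [Fintype U] (m : Set U → ℝ) : Prop :=
  (∀ X : Set U, 0 ≤ m X) ∧
  (∀ X Y : Set U, X ⊂ Y → m X < m Y) ∧
  (∀ X Y : Set U, X.ncard = Y.ncard → m X = m Y)

/-- Expected granularity `EG_m(π) = Σ_{X ∈ π} m(X)·(|X|/|U|)`. -/
noncomputable def EG {U : Type*} [Fintype U] (m : Set U → ℝ) (π : Finset (Set U)) : ℝ :=
  ∑ X ∈ π, m X * ((X.ncard : ℝ) / (Fintype.card U : ℝ))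

/-- The partition `U/R` of `U` into the equivalence classes of `R`. -/
noncomputable def partitionOf {U : Type*} [Fintype U] (R : Setoid U) : Finset (Set U) :=
  haveI := Classical.decEq (Set U)
  Finset.univ.image (fun x : U => ecls R x)

/-- `Gη_R = EG_m(Π_1) − (1 − η_R)·EG_m(U/R)`, where `Π_1 = {U}`. -/
noncomputable def Geta {U : Type*} [Fintype U] (m : Set U → ℝ) (C D : Setoid U)
    (α : ℝ) (R : Setoid U) : ℝ :=
  EG m ({Set.univ} : Finset (Set U)) - (1 - eta C D α R) * EG m (partitionOf R)

/-- `Gμ_R = μ_R·EG_m(U/R)`. -/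
noncomputable def Gmu {U : Type*} [Fintype U] (m : Set U → ℝ) (C D : Setoid U)
    (β : ℝ) (R : Setoid U) : ℝ :=
  mu C D β R * EG m (partitionOf R)

/-!
Both factors of `Gμ_R = μ_R · EG_m(U/R)` are nonnegative and grow when `R` is coarsened: upper
approximations grow with the classes, and `EG_m(U/R)` is the average of `m([x]_R)` over `x ∈ U`,
which grows since `[x]_P ⊆ [x]_Q` and `m` is monotone.
-/

lemma ecls_eq_iff_mem {U : Type*} (R : Setoid U) {x y : U} :
    ecls R x = ecls R y ↔ x ∈ ecls R y := by
  constructor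
  · intro hxy
    exact hxy ▸ R.refl x
  · intro hyx
    ext z
    exact ⟨fun hz => R.trans hyx hz, fun hz => R.trans (R.symm hyx) hz⟩

lemma card_filter_ecls_eq {U : Type*} [Fintype U] [DecidableEq (Set U)] (R : Setoid U) (y : U) :
    (Finset.univ.filter fun x => ecls R x = ecls R y).card = (ecls R y).ncard := by
  rw [← Set.ncard_coe_finset]
  congr 1
  ext x
  simp [ecls_eq_iff_mem]

lemma EG_partitionOf {U : Type*} [Fintype U] (m : Set U → ℝ) (R : Setoid U) :
    EG m (partitionOf R) = ∑ x : U, m (ecls R x) / Fintype.card U := by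
  let := Classical.decEq (Set U)
  refine Finset.sum_image' _ fun y _ => ?_
  rw [Finset.sum_congr rfl fun x hx => by rw [(Finset.mem_filter.mp hx).2], Finset.sum_const,
    card_filter_ecls_eq, nsmul_eq_mul]
  ring

lemma EG_partitionOf_nonneg {U : Type*} [Fintype U] {m : Set U → ℝ} (hm : ∀ X, 0 ≤ m X)
    (R : Setoid U) : 0 ≤ EG m (partitionOf R) := by
  rw [EG_partitionOf]
  exact Finset.sum_nonneg fun x _ => div_nonneg (hm _) (Nat.cast_nonneg _)

lemma EG_partitionOf_mono {U : Type*} [Fintype U] {m : Set U → ℝ} (hm : Monotone m)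
    {P Q : Setoid U} (h : Refines P Q) : EG m (partitionOf P) ≤ EG m (partitionOf Q) := by
  rw [EG_partitionOf, EG_partitionOf]
  exact Finset.sum_le_sum fun x _ => div_le_div_of_nonneg_right (hm (h x)) (Nat.cast_nonneg _)

lemma IsGranularityMeasure.monotone {U : Type*} [Fintype U] {m : Set U → ℝ}
    (hm : IsGranularityMeasure m) : Monotone m := by
  intro X Y hXY
  rcases eq_or_ne X Y with rfl | hne
  · exact le_rfl
  · exact (hm.2.1 X Y (hXY.ssubset_of_ne hne)).le

lemma upperApprox_mono {U : Type*} {P Q : Setoid U} (h : Refines P Q) (X : Set U) :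
    upperApprox P X ⊆ upperApprox Q X := fun x ⟨z, hzP, hzX⟩ => ⟨z, h x hzP, hzX⟩

lemma mu_nonneg {U : Type*} [Fintype U] (C D : Setoid U) (β : ℝ) (R : Setoid U) :
    0 ≤ mu C D β R := by
  unfold mu
  positivity

lemma mu_mono {U : Type*} [Fintype U] (C D : Setoid U) (β : ℝ) {P Q : Setoid U}
    (h : Refines P Q) : mu C D β P ≤ mu C D β Q := by
  unfold mu
  gcongr with q
  exacts [Set.toFinite _, upperApprox_mono h _]

theorem Gmu_monotone_of_refines_general {U : Type*} [Fintype U]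
    (m : Set U → ℝ) (hm : IsGranularityMeasure m)
    (C D : Setoid U) (β : ℝ)
    (P Q : Setoid U) (h : Refines P Q) :
    Gmu m C D β P ≤ Gmu m C D β Q :=
  mul_le_mul (mu_mono C D β h) (EG_partitionOf_mono hm.monotone h)
    (EG_partitionOf_nonneg hm.1 P) (mu_nonneg C D β Q)

theorem Gmu_monotone_of_refines {U : Type*} [Fintype U] [Nonempty U]
    (m : Set U → ℝ) (hm : IsGranularityMeasure m)
    (C D : Setoid U) (β : ℝ) (hβ0 : 0 ≤ β) (hβ1 : β < 1)
    (P Q : Setoid U) (h : Refines P Q) :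
    Gmu m C D β P ≤ Gmu m C D β Q :=
  Gmu_monotone_of_refines_general m hm C D β P Q h
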